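/- If γ ⊂ E is a contour, then the dual edge set γ* = {e* : e ∈ γ} is a circuit (a closed self-avoiding path) in the dual lattice L²*. -/

import Mathlib

open MeasureTheory Filter

/-- An edge of the square lattice `ℤ × ℤ`, encoded by its lower-left endpoint `base`
together with its direction: a horizontal edge joins `base` to `base + (1,0)`,
a vertical edge joins `base` to `base + (0,1)`. This encodes exactly the set
`𝔼` of nearest-neighbour edges of `ℤ²`. -/
structure LatticeEdge where
  base : ℤ × ℤ
  horiz : Bool
deriving DecidableEq

namespace LatticeEdge

/-- First endpoint of an edge. -/
def fst (e : LatticeEdge) : ℤ × ℤ := e.base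

/-- Second endpoint of an edge. -/
def snd (e : LatticeEdge) : ℤ × ℤ :=
  if e.horiz then (e.base.1 + 1, e.base.2) else (e.base.1, e.base.2 + 1)

/-- The two endpoints of an edge, as an unordered pair. -/
def ends (e : LatticeEdge) : Sym2 (ℤ × ℤ) := s(e.fst, e.snd)

end LatticeEdge

/-- The graph on `ℤ²` whose edges are the lattice edges belonging to `S`. -/
def graphOf (S : Set LatticeEdge) : SimpleGraph (ℤ × ℤ) where
  Adj u v := u ≠ v ∧ ∃ e ∈ S, e.ends = s(u, v)
  symm := by
    constructor
    intro u v h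
    obtain ⟨hne, e, he, hs⟩ := h
    exact ⟨hne.symm, e, he, hs.trans (Sym2.eq_swap)⟩
  loopless := by
    constructor
    intro u h
    exact h.1 rfl

/-- The graph `(ℤ², 𝔼 ∖ γ)` obtained by deleting the edges of `γ`. -/
def complGraph (γ : Finset LatticeEdge) : SimpleGraph (ℤ × ℤ) :=
  graphOf {e | e ∉ γ}

/-- A finite set `γ` of lattice edges is a *contour* if the graph `(ℤ², 𝔼 ∖ γ)` has
exactly one finite connected component, and `γ` is minimal with this property:
for every `e ∈ γ`, the graph `(ℤ², 𝔼 ∖ (γ ∖ {e}))` has no finite connected component. -/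
def IsContour (γ : Finset LatticeEdge) : Prop :=
  (∃! C : (complGraph γ).ConnectedComponent, C.supp.Finite) ∧
  ∀ e ∈ γ, ∀ C : (graphOf {f | f ∉ γ ∨ f = e}).ConnectedComponent, ¬ C.supp.Finite

/-- A contour `γ` *surrounds* a set `X ⊆ ℤ²` of vertices if `X` is contained in the
vertex set `I_γ` of the (unique) finite connected component of `(ℤ², 𝔼 ∖ γ)`. -/
def Surrounds (γ : Finset LatticeEdge) (X : Set (ℤ × ℤ)) : Prop :=
  IsContour γ ∧ ∃ C : (complGraph γ).ConnectedComponent, C.supp.Finite ∧ X ⊆ C.supp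

/-- `Γ^n_X` : the set of contours of cardinality `n` surrounding `X`. -/
def GammaN (X : Set (ℤ × ℤ)) (n : ℕ) : Set (Finset LatticeEdge) :=
  {γ | Surrounds γ X ∧ γ.card = n}

/-- `‖x‖ = 2(x₁ + x₂ + 2)`, the cardinality of a minimal contour surrounding `{0, x}`. -/
def normC (x : ℤ × ℤ) : ℕ := (2 * (x.1 + x.2 + 2)).toNat

/-- `β_x` : the number of minimal contours surrounding `{0, x}`. -/
noncomputable def betaX (x : ℤ × ℤ) : ℕ := Nat.card ↥(GammaN {0, x} (normC x))

/-- Number of horizontal edges of `γ`, i.e. `|γ ∩ 𝔼ʰ|`. -/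
def hCount (γ : Finset LatticeEdge) : ℕ := (γ.filter fun e => e.horiz = true).card

/-- Number of vertical edges of `γ`, i.e. `|γ ∩ 𝔼ᵛ|`. -/
def vCount (γ : Finset LatticeEdge) : ℕ := (γ.filter fun e => e.horiz = false).card

/-- The dual edge `e*` of a lattice edge `e`.  We identify the dual lattice
`ℤ² + (1/2, 1/2)` with `ℤ²` via `(a,b) ↦ (a + 1/2, b + 1/2)`; under this
identification the dual edge crossing the horizontal edge `(a,b)–(a+1,b)` joins
`(a, b-1)` to `(a, b)` (a vertical dual edge), and the dual edge crossing the
vertical edge `(a,b)–(a,b+1)` joins `(a-1, b)` to `(a, b)` (a horizontal dual edge). -/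
def dualEdge (e : LatticeEdge) : LatticeEdge :=
  if e.horiz then ⟨(e.base.1, e.base.2 - 1), false⟩ else ⟨(e.base.1 - 1, e.base.2), true⟩

/-- A finite set `S` of (dual) lattice edges is a *circuit* if it is the edge set of a
closed self-avoiding path: there are `n ≥ 3` distinct vertices `c 0, …, c (n-1)`,
cyclically consecutive ones being joined by an edge of `S`, and every edge of `S` arising
this way. -/
def IsCircuit (S : Finset LatticeEdge) : Prop :=
  ∃ n : ℕ, 3 ≤ n ∧ ∃ c : ZMod n → ℤ × ℤ, Function.Injective c ∧
    (∀ i : ZMod n, ∃ e ∈ S, e.ends = s(c i, c (i + 1))) ∧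
    (∀ e ∈ S, ∃ i : ZMod n, e.ends = s(c i, c (i + 1)))

/-- The dual edge `e_k*` joining `(k - 1/2, -1/2)` to `(k - 1/2, 1/2)`; in our
identification of the dual lattice with `ℤ²` this is the vertical dual edge with base
`(k-1, -1)`, i.e. the dual of the horizontal edge `(k-1, 0)–(k, 0)`. -/
def ekStar (k : ℤ) : LatticeEdge := ⟨(k - 1, -1), false⟩

/-- The probability that the edge `e` is open: `p_h` for horizontal edges and `p_v`
for vertical ones. -/
noncomputable def edgeProb (ph pv : ℝ) (e : LatticeEdge) : ℝ := if e.horiz then ph else pv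

/-- `P` is the Bernoulli product measure `P_{(p_h, p_v)}` on configurations
`ω ∈ {0,1}^𝔼` (encoded as `LatticeEdge → Bool`, `true` = open): it is a probability
measure and, for every finite set of edges, the states of those edges are independent
Bernoulli variables with the correct parameters.  These cylinder probabilities
characterize the product measure uniquely. -/
def IsBernoulliProduct (ph pv : ℝ) (P : Measure (LatticeEdge → Bool)) : Prop :=
  IsProbabilityMeasure P ∧
    ∀ (F : Finset LatticeEdge) (σ : LatticeEdge → Bool),
      P {ω | ∀ e ∈ F, ω e = σ e} =
        ∏ e ∈ F, ENNReal.ofReal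
          (if σ e then edgeProb ph pv e else 1 - edgeProb ph pv e)

/-- The graph of open edges of the configuration `ω`. -/
def openGraph (ω : LatticeEdge → Bool) : SimpleGraph (ℤ × ℤ) :=
  graphOf {e | ω e = true}

/-- `x` and `y` belong to the same finite open cluster of the configuration `ω`. -/
def SameFiniteCluster (ω : LatticeEdge → Bool) (x y : ℤ × ℤ) : Prop :=
  ∃ C : (openGraph ω).ConnectedComponent, x ∈ C.supp ∧ y ∈ C.supp ∧ C.supp.Finite

/-- The truncated (finite) connectivity `τ^f_p(x,y)`: the probability that `x` and `y`
belong to the same finite open cluster. -/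
noncomputable def tauF (P : Measure (LatticeEdge → Bool)) (x y : ℤ × ℤ) : ℝ :=
  (P {ω | SameFiniteCluster ω x y}).toReal

/-- The box `V_N = ([-N,N] × [-N,N]) ∩ ℤ²`. -/
def VN (N : ℕ) : Set (ℤ × ℤ) := {v | |v.1| ≤ (N : ℤ) ∧ |v.2| ≤ (N : ℤ)}

/-- The interior vertex boundary `∂_v^int V_N = {x ∈ V_N : d(x, ℤ² ∖ V_N) = 1}`. -/
def intBdry (N : ℕ) : Set (ℤ × ℤ) :=
  {v | (|v.1| ≤ (N : ℤ) ∧ |v.2| ≤ (N : ℤ)) ∧ (|v.1| = (N : ℤ) ∨ |v.2| = (N : ℤ))}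

/-- `e ∈ E_N`: both endpoints of `e` lie in `V_N`. -/
def edgeInBox (N : ℕ) (e : LatticeEdge) : Prop := e.fst ∈ VN N ∧ e.snd ∈ VN N

/-- The graph on `(V_N, open edges of E_N)` (vertices outside `V_N` are isolated). -/
def openGraphN (N : ℕ) (ω : LatticeEdge → Bool) : SimpleGraph (ℤ × ℤ) :=
  graphOf {e | edgeInBox N e ∧ ω e = true}

/-- The finite-volume event defining `τ^{f,N}_p(x,y)`: there is an open cluster `A` of
`(V_N, open edges of E_N)` with `{x,y} ⊆ V_A` and `V_A ∩ ∂_v^int V_N = ∅`. -/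
def FiniteVolEvent (N : ℕ) (x y : ℤ × ℤ) (ω : LatticeEdge → Bool) : Prop :=
  ∃ C : (openGraphN N ω).ConnectedComponent,
    x ∈ C.supp ∧ y ∈ C.supp ∧ C.supp ∩ intBdry N = ∅

/-- The finite-volume finite connectivity `τ^{f,N}_p(x,y)`. -/
noncomputable def tauFN (P : Measure (LatticeEdge → Bool)) (N : ℕ) (x y : ℤ × ℤ) : ℝ :=
  (P {ω | FiniteVolEvent N x y ω}).toReal

/-- `λ = (1-p)/p`. -/
noncomputable def lam (p : ℝ) : ℝ := (1 - p) / p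

/-- The threshold `η̃(p_h, x₁, x₂)` from the paper. -/
noncomputable def etaTilde (ph : ℝ) (x1 x2 : ℤ) : ℝ :=
  ((betaX (x1, x2) : ℝ) * ph ^ (4 * (x1 + x2 + 2)) /
      ((4 ^ 3 * lam ph) ^ (x1 + x2 + 3) / (1 - 4 ^ 3 * lam ph) +
        (betaX (x1, x2) : ℝ) * (1 + 12 * lam ph) ^ (2 * (x1 + x2 + 2)))) ^
    (1 / (2 * ((x2 : ℝ) - (x1 : ℝ))))

/-!
Let `I` be the finite component of `(ℤ², 𝔼 ∖ γ)`. Minimality of `γ` forces `γ` to be exactly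
the edge boundary of `I`, so every unit square meets `γ` in an even number of edges: all degrees
of `γ*` are even. Conversely, if `D ⊆ γ` is nonempty and `D*` has even degrees, then the parity of
the number of horizontal edges of `D` on the ray to the right of a vertex is a finitely supported
function whose jumps are exactly the edges of `D`. Its support is a finite set whose edge boundary
`D` misses `γ ∖ D`, so restoring any edge of `γ ∖ D` would leave a finite component; hence `D = γ`.
Thus `γ*` is a nonempty even edge set with no proper nonempty even subset, and closing up a
longest path in it yields a cycle whose edges must be all of `γ*`.
-/

theorem List.exists_zmod_injective_of_isChain {α : Type*} {R : α → α → Prop} {l : List α}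
    (hl : l ≠ []) (hnd : l.Nodup) (hchain : l.IsChain R) (hclose : R (l.getLast hl) (l.head hl)) :
    ∃ c : ZMod l.length → α, Function.Injective c ∧ ∀ i, R (c i) (c (i + 1)) := by
  have : NeZero l.length := ⟨(List.length_pos_iff.mpr hl).ne'⟩
  refine ⟨fun i => l[i.val]'(ZMod.val_lt i),
    fun i j hij => ZMod.val_injective _ (hnd.getElem_inj_iff.mp hij), fun i => ?_⟩
  have hsucc : (i + 1).val = (i.val + 1) % l.length := by
    rw [ZMod.val_add, ZMod.val_one_eq_one_mod, Nat.add_mod_mod]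
  by_cases hi : i.val + 1 < l.length
  · simp only [hsucc, Nat.mod_eq_of_lt hi]
    exact List.isChain_iff_getElem.mp hchain _ hi
  · have hi' : i.val + 1 = l.length := by have := ZMod.val_lt i; omega
    simp only [hsucc, hi', Nat.mod_self]
    rw [List.getLast_eq_getElem, List.head_eq_getElem] at hclose
    convert hclose using 2
    omega

theorem SimpleGraph.exists_path_of_forall_adj_head_mem {V : Type*} {G : SimpleGraph V}
    (hfin : G.support.Finite) {u v : V} (huv : G.Adj u v) :
    ∃ v₀ v₁ rest, (v₀ :: v₁ :: rest).Nodup ∧ (v₀ :: v₁ :: rest).IsChain G.Adj ∧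
      ∀ w, G.Adj w v₀ → w ∈ v₀ :: v₁ :: rest := by
  classical
  set B := hfin.toFinset.card
  set paths :=
    {l : List V | 2 ≤ l.length ∧ l.Nodup ∧ l.IsChain G.Adj ∧ ∀ x ∈ l, x ∈ G.support}
  have hB : ∀ l ∈ paths, l.length ≤ B := fun l hl => by
    rw [← List.toFinset_card_of_nodup hl.2.1]
    exact Finset.card_le_card fun x hx =>
      hfin.mem_toFinset.mpr (hl.2.2.2 x (List.mem_toFinset.mp hx))
  have huv' : [u, v] ∈ paths := by
    refine ⟨le_rfl, by simpa using huv.ne, List.isChain_pair.mpr huv, ?_⟩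
    simp only [List.mem_cons, List.not_mem_nil, or_false]
    rintro x (rfl | rfl)
    exacts [⟨_, huv⟩, ⟨_, huv.symm⟩]
  obtain ⟨l, hl, hmax⟩ :=
    (measure fun l : List V => B - l.length).wf.has_min paths ⟨_, huv'⟩
  obtain ⟨v₀, v₁, rest, rfl⟩ : ∃ v₀ v₁ rest, l = v₀ :: v₁ :: rest := by
    match l, hl.1 with
    | v₀ :: v₁ :: rest, _ => exact ⟨v₀, v₁, rest, rfl⟩
  refine ⟨v₀, v₁, rest, hl.2.1, hl.2.2.1, fun w hw => by_contra fun hwl => ?_⟩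
  have hext : w :: v₀ :: v₁ :: rest ∈ paths := by
    refine ⟨by simp, List.nodup_cons.mpr ⟨hwl, hl.2.1⟩,
      List.isChain_cons_cons.mpr ⟨hw, hl.2.2.1⟩, ?_⟩
    rintro x (_ | ⟨_, hx⟩)
    exacts [⟨_, hw⟩, hl.2.2.2 x hx]
  have := hB _ hext
  exact hmax _ hext (show B - (rest.length + 3) < B - (rest.length + 2) by simp at this; omega)

theorem SimpleGraph.ConnectedComponent.supp_subset_of_adj_mem {V : Type*} {G : SimpleGraph V}
    {P : Set V} (hP : ∀ ⦃u v⦄, u ∈ P → G.Adj u v → v ∈ P) {v : V} (hv : v ∈ P) :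
    (G.connectedComponentMk v).supp ⊆ P := by
  intro w hw
  have hvw := (SimpleGraph.reachable_iff_reflTransGen v w).mp (ConnectedComponent.exact hw).symm
  clear hw
  induction hvw with
  | refl => exact hv
  | tail _ hadj ih => exact hP ih hadj

namespace LatticeEdge

def horizontal (a b : ℤ) : LatticeEdge := ⟨(a, b), true⟩

def vertical (a b : ℤ) : LatticeEdge := ⟨(a, b), false⟩

theorem fst_ne_snd (e : LatticeEdge) : e.fst ≠ e.snd := by
  rcases e with ⟨⟨x, y⟩, _ | _⟩ <;> simp [fst, snd]

theorem ends_injective : Function.Injective ends := by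
  rintro ⟨⟨x, y⟩, _ | _⟩ ⟨⟨x', y'⟩, _ | _⟩ h <;>
    simp only [ends, fst, snd, Sym2.eq_iff, Prod.ext_iff] at h <;> simp <;> grind

theorem not_isDiag_ends (e : LatticeEdge) : ¬e.ends.IsDiag := by
  simpa [ends] using e.fst_ne_snd

end LatticeEdge

open LatticeEdge

def edgeBoundary (P : Set (ℤ × ℤ)) : Set LatticeEdge := {e | Xor (e.fst ∈ P) (e.snd ∈ P)}

theorem edgeBoundary_nonempty {P : Set (ℤ × ℤ)} (hfin : P.Finite) (hne : P.Nonempty) :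
    (edgeBoundary P).Nonempty := by
  obtain ⟨w, hw, hmax⟩ := hfin.exists_maximalFor Prod.fst P hne
  refine ⟨horizontal w.1 w.2, Or.inl ⟨hw, fun h => ?_⟩⟩
  have := hmax h
  simp [horizontal, LatticeEdge.snd] at this

theorem graphOf_adj_of_mem {S : Set LatticeEdge} {e : LatticeEdge} (he : e ∈ S) :
    (graphOf S).Adj e.fst e.snd :=
  ⟨e.fst_ne_snd, e, he, rfl⟩

theorem not_mem_edgeBoundary_of_mem {S : Set LatticeEdge} {e : LatticeEdge} (he : e ∈ S)
    (C : (graphOf S).ConnectedComponent) : e ∉ edgeBoundary C.supp := by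
  simp only [edgeBoundary, Set.mem_ofPred_eq, xor_iff_not_iff, not_not]
  exact C.mem_supp_congr_adj (graphOf_adj_of_mem he)

theorem mem_of_graphOf_adj {S : Set LatticeEdge} {P : Set (ℤ × ℤ)}
    (hS : ∀ f ∈ S, f ∉ edgeBoundary P) ⦃u v : ℤ × ℤ⦄ (hu : u ∈ P)
    (huv : (graphOf S).Adj u v) : v ∈ P := by
  obtain ⟨-, f, hf, hends⟩ := huv
  have := hS f hf
  simp only [edgeBoundary, Set.mem_ofPred_eq, xor_iff_not_iff, not_not] at this
  rcases Sym2.eq_iff.mp hends with ⟨rfl, rfl⟩ | ⟨rfl, rfl⟩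
  exacts [this.mp hu, this.mpr hu]

theorem support_graphOf_finite (S : Finset LatticeEdge) :
    (graphOf (S : Set LatticeEdge)).support.Finite := by
  refine (S.finite_toSet.biUnion fun e _ => Set.toFinite {e.fst, e.snd}).subset ?_
  rintro v ⟨w, -, e, he, hends⟩
  have hv : v ∈ e.ends := hends ▸ Sym2.mem_mk_left v w
  exact Set.mem_biUnion he (Sym2.mem_iff.mp hv)

theorem IsContour.exists_mem_edgeBoundary {γ : Finset LatticeEdge} (h : IsContour γ)
    {e : LatticeEdge} (he : e ∈ γ) {P : Set (ℤ × ℤ)} (hfin : P.Finite) (hne : P.Nonempty) :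
    ∃ f ∈ edgeBoundary P, f ∉ γ ∨ f = e := by
  by_contra! hP
  have hS : ∀ f ∈ {f | f ∉ γ ∨ f = e}, f ∉ edgeBoundary P := fun f hf hfP =>
    (hf.elim (· (hP f hfP).1) (hP f hfP).2)
  obtain ⟨v, hv⟩ := hne
  exact h.2 e he _ <| hfin.subset <|
    SimpleGraph.ConnectedComponent.supp_subset_of_adj_mem (mem_of_graphOf_adj hS) hv

theorem IsContour.coe_eq_edgeBoundary {γ : Finset LatticeEdge} (h : IsContour γ)
    (C : (complGraph γ).ConnectedComponent) (hC : C.supp.Finite) :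
    (γ : Set LatticeEdge) = edgeBoundary C.supp := by
  ext e
  refine ⟨fun he => ?_, fun hb => by_contra fun he => not_mem_edgeBoundary_of_mem he C hb⟩
  obtain ⟨f, hfb, hf | rfl⟩ := h.exists_mem_edgeBoundary he hC C.nonempty_supp
  · exact absurd hfb (not_mem_edgeBoundary_of_mem hf C)
  · exact hfb

def edgeParity (D : Finset LatticeEdge) (e : LatticeEdge) : ZMod 2 := if e ∈ D then 1 else 0

def faceParity (D : Finset LatticeEdge) (a b : ℤ) : ZMod 2 :=
  edgeParity D (horizontal a b) + edgeParity D (horizontal a (b + 1)) +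
    edgeParity D (vertical a b) + edgeParity D (vertical (a + 1) b)

def degParity (S : Finset LatticeEdge) (w : ℤ × ℤ) : ZMod 2 :=
  (S.filter fun f => w ∈ f.ends).card

theorem faceParity_eq_zero_of_coe_eq_edgeBoundary {D : Finset LatticeEdge} {P : Set (ℤ × ℤ)}
    (hD : (D : Set LatticeEdge) = edgeBoundary P) (a b : ℤ) : faceParity D a b = 0 := by
  classical
  set χ : ℤ × ℤ → ZMod 2 := fun v => if v ∈ P then 1 else 0
  have hχ : ∀ e, edgeParity D e = χ e.fst + χ e.snd := by
    intro e
    simp only [edgeParity, χ, ← Finset.mem_coe, hD, edgeBoundary, Set.mem_ofPred_eq, Xor]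
    split_ifs <;> tauto
  simp only [faceParity, hχ, horizontal, vertical, fst, snd, ↓reduceIte, Bool.false_eq_true]
  generalize χ (a, b) = p, χ (a + 1, b) = q, χ (a, b + 1) = r, χ (a + 1, b + 1) = s
  grind

theorem mem_dualEdge_ends_iff {e : LatticeEdge} {a b : ℤ} :
    (a, b) ∈ (dualEdge e).ends ↔ e ∈ ({horizontal a b, horizontal a (b + 1), vertical a b,
      vertical (a + 1) b} : Finset LatticeEdge) := by
  rcases e with ⟨⟨x, y⟩, _ | _⟩ <;>
    simp [dualEdge, ends, fst, snd, horizontal, vertical, Prod.ext_iff] <;> omega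

theorem dualEdge_injective : Function.Injective dualEdge := by
  rintro ⟨⟨x, y⟩, _ | _⟩ ⟨⟨x', y'⟩, _ | _⟩ h <;> simp [dualEdge] at h ⊢ <;> omega

theorem degParity_image_dualEdge (D : Finset LatticeEdge) (a b : ℤ) :
    degParity (D.image dualEdge) (a, b) = faceParity D a b := by
  rw [degParity, Finset.filter_image, Finset.card_image_of_injective _ dualEdge_injective]
  simp only [mem_dualEdge_ends_iff]
  rw [Finset.filter_mem_eq_inter, Finset.inter_comm, ← Finset.filter_mem_eq_inter,
    ← Finset.sum_boole, Finset.sum_insert (by simp [horizontal, vertical]),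
    Finset.sum_insert (by simp [horizontal, vertical]), Finset.sum_insert (by simp [vertical]),
    Finset.sum_singleton]
  simp only [faceParity, edgeParity, add_assoc]

section RowParity

variable (D : Finset LatticeEdge)

def rowParity (x y : ℤ) : ZMod 2 :=
  ∑ f ∈ D, if f.horiz ∧ f.base.2 = y ∧ x ≤ f.base.1 then 1 else 0

def coordBound : ℕ := D.sup fun f => f.base.1.natAbs ⊔ f.base.2.natAbs

variable {D}

theorem natAbs_le_coordBound {f : LatticeEdge} (hf : f ∈ D) :
    f.base.1.natAbs ≤ coordBound D ∧ f.base.2.natAbs ≤ coordBound D :=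
  sup_le_iff.mp (Finset.le_sup (f := fun f : LatticeEdge => f.base.1.natAbs ⊔ f.base.2.natAbs) hf)

theorem edgeParity_eq_zero_of_coordBound_lt {e : LatticeEdge}
    (h : coordBound D < e.base.1.natAbs ∨ coordBound D < e.base.2.natAbs) : edgeParity D e = 0 :=
  if_neg fun he => by have := natAbs_le_coordBound he; omega

theorem rowParity_eq_zero_of_coordBound_lt {x : ℤ} (y : ℤ) (hx : coordBound D < x) :
    rowParity D x y = 0 :=
  Finset.sum_eq_zero fun f hf => if_neg fun hfx => by
    have := natAbs_le_coordBound hf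
    omega

theorem rowParity_eq_zero_of_coordBound_lt_natAbs (x : ℤ) {y : ℤ}
    (hy : coordBound D < y.natAbs) : rowParity D x y = 0 :=
  Finset.sum_eq_zero fun f hf => if_neg fun hfy => by
    have := natAbs_le_coordBound hf
    omega

theorem rowParity_eq_add_edgeParity (x y : ℤ) :
    rowParity D x y = rowParity D (x + 1) y + edgeParity D (horizontal x y) := by
  rw [rowParity, rowParity, edgeParity, ← Finset.sum_ite_eq' D (horizontal x y) fun _ => 1,
    ← Finset.sum_add_distrib]
  refine Finset.sum_congr rfl fun f _ => ?_
  rcases f with ⟨⟨a, b⟩, _ | _⟩ <;>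
    simp only [horizontal, LatticeEdge.mk.injEq, Prod.ext_iff] <;> split_ifs <;> simp_all <;> omega

theorem rowParity_add_rowParity_add_one (hD : ∀ a b, faceParity D a b = 0) (x y : ℤ) :
    rowParity D x y + rowParity D x (y + 1) = edgeParity D (vertical x y) := by
  have hright : ∀ x : ℤ, coordBound D < x →
      rowParity D x y + rowParity D x (y + 1) = edgeParity D (vertical x y) := fun x hx => by
    rw [rowParity_eq_zero_of_coordBound_lt y hx, rowParity_eq_zero_of_coordBound_lt _ hx,
      edgeParity_eq_zero_of_coordBound_lt (Or.inl (by simp only [vertical]; omega)), add_zero]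
  rcases le_or_gt x (coordBound D + 1) with hx | hx
  · induction x, hx using Int.leInductionDown with
    | base => exact hright _ (by omega)
    | pred n _ ih =>
      have hface := hD (n - 1) y
      rw [faceParity, sub_add_cancel] at hface
      rw [rowParity_eq_add_edgeParity (n - 1) y, rowParity_eq_add_edgeParity (n - 1) (y + 1),
        sub_add_cancel]
      grind
  · exact hright x (by omega)

theorem rowParity_eq_zero_of_lt_neg_coordBound (hD : ∀ a b, faceParity D a b = 0) {x : ℤ}
    (y : ℤ) (hx : x < -coordBound D) :
    rowParity D x y = 0 := by
  have hcol : ∀ y, rowParity D x (y + 1) = rowParity D x y := fun y => by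
    have := rowParity_add_rowParity_add_one hD x y
    rw [edgeParity_eq_zero_of_coordBound_lt (Or.inl (by simp only [vertical]; omega))] at this
    exact (CharTwo.add_eq_zero.mp this).symm
  rcases le_or_gt y (coordBound D + 1) with hy | hy
  · induction y, hy using Int.leInductionDown with
    | base => exact rowParity_eq_zero_of_coordBound_lt_natAbs x (by omega)
    | pred n _ ih => rwa [← hcol, sub_add_cancel]
  · exact rowParity_eq_zero_of_coordBound_lt_natAbs x (by omega)

theorem edgeParity_eq_rowParity_add (hD : ∀ a b, faceParity D a b = 0) (e : LatticeEdge) :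
    edgeParity D e = rowParity D e.fst.1 e.fst.2 + rowParity D e.snd.1 e.snd.2 := by
  rcases e with ⟨⟨x, y⟩, _ | _⟩
  · exact (rowParity_add_rowParity_add_one hD x y).symm
  · have := rowParity_eq_add_edgeParity (D := D) x y
    simp only [horizontal] at this
    simp only [LatticeEdge.fst, LatticeEdge.snd, ↓reduceIte]
    grind

theorem exists_finite_coe_eq_edgeBoundary (hD : ∀ a b, faceParity D a b = 0) :
    ∃ P : Set (ℤ × ℤ), P.Finite ∧ (D : Set LatticeEdge) = edgeBoundary P := by
  refine ⟨{v | rowParity D v.1 v.2 = 1}, ?_, ?_⟩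
  · refine (Set.finite_Icc (-(coordBound D : ℤ), -(coordBound D : ℤ))
      ((coordBound D : ℤ), (coordBound D : ℤ))).subset ?_
    rintro ⟨x, y⟩ (hv : rowParity D x y = 1)
    have h1 : ¬coordBound D < x := fun h => by
      simp [rowParity_eq_zero_of_coordBound_lt y h] at hv
    have h2 : ¬x < -coordBound D := fun h => by
      simp [rowParity_eq_zero_of_lt_neg_coordBound hD y h] at hv
    have h3 : ¬coordBound D < y.natAbs := fun h => by
      simp [rowParity_eq_zero_of_coordBound_lt_natAbs x h] at hv
    simp only [Set.mem_Icc, Prod.mk_le_mk]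
    omega
  · ext e
    have := edgeParity_eq_rowParity_add hD e
    simp only [edgeParity, Finset.mem_coe, edgeBoundary, Set.mem_ofPred_eq, Xor] at this ⊢
    generalize rowParity D e.fst.1 e.fst.2 = p, rowParity D e.snd.1 e.snd.2 = q at this
    by_cases he : e ∈ D <;> simp only [he, if_true, if_false, true_iff, false_iff] at this ⊢ <;>
      revert p q <;> decide

end RowParity

theorem IsContour.eq_of_subset {γ : Finset LatticeEdge} (h : IsContour γ) {D : Finset LatticeEdge}
    (hDγ : D ⊆ γ) (hne : D.Nonempty) (hD : ∀ a b, faceParity D a b = 0) : D = γ := by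
  obtain ⟨P, hPfin, hP⟩ := exists_finite_coe_eq_edgeBoundary hD
  have hPne : P.Nonempty := by
    obtain ⟨f, hf⟩ := hne
    rcases (hP ▸ Finset.mem_coe.mpr hf : f ∈ edgeBoundary P) with ⟨hfP, -⟩ | ⟨hfP, -⟩
    exacts [⟨_, hfP⟩, ⟨_, hfP⟩]
  refine hDγ.antisymm fun e he => by_contra fun heD => ?_
  obtain ⟨f, hfP, hf | rfl⟩ := h.exists_mem_edgeBoundary he hPfin hPne
  · exact hf (hDγ (hP ▸ hfP : f ∈ (D : Set LatticeEdge)))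
  · exact heD (hP ▸ hfP : f ∈ (D : Set LatticeEdge))

theorem IsContour.image_dualEdge_eq_of_subset {γ : Finset LatticeEdge} (h : IsContour γ)
    {T : Finset LatticeEdge} (hT : T ⊆ γ.image dualEdge) (hne : T.Nonempty)
    (heven : ∀ w, degParity T w = 0) : T = γ.image dualEdge := by
  obtain ⟨D, hDγ, rfl⟩ := Finset.subset_image_iff.mp hT
  rw [h.eq_of_subset hDγ (Finset.image_nonempty.mp hne) fun a b => by
    rw [← degParity_image_dualEdge]; exact heven (a, b)]

theorem exists_ne_mem_ends_of_degParity_eq_zero {S : Finset LatticeEdge} {v : ℤ × ℤ}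
    (hv : degParity S v = 0) {f : LatticeEdge} (hf : f ∈ S) (hvf : v ∈ f.ends) :
    ∃ f' ∈ S, f' ≠ f ∧ v ∈ f'.ends := by
  set star := S.filter fun f => v ∈ f.ends
  have hpos : 0 < star.card := Finset.card_pos.mpr ⟨f, Finset.mem_filter.mpr ⟨hf, hvf⟩⟩
  have hne1 : star.card ≠ 1 := fun h1 => by simp [degParity, star, h1] at hv
  obtain ⟨f', hf', hne⟩ := Finset.exists_mem_ne (s := star) (by omega) f
  exact ⟨f', (Finset.mem_filter.mp hf').1, hne, (Finset.mem_filter.mp hf').2⟩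

theorem exists_cycle_of_degParity_eq_zero {S : Finset LatticeEdge} (hne : S.Nonempty)
    (heven : ∀ w, degParity S w = 0) :
    ∃ n, 3 ≤ n ∧ ∃ c : ZMod n → ℤ × ℤ, Function.Injective c ∧
      ∀ i, (graphOf (S : Set LatticeEdge)).Adj (c i) (c (i + 1)) := by
  obtain ⟨f₀, hf₀⟩ := hne
  obtain ⟨v₀, v₁, rest, hnd, hchain, hmax⟩ :=
    SimpleGraph.exists_path_of_forall_adj_head_mem (support_graphOf_finite S)
      (graphOf_adj_of_mem hf₀)
  set l := v₀ :: v₁ :: rest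
  obtain ⟨-, f₁, hf₁, hf₁ends⟩ := (List.isChain_cons_cons.mp hchain).1
  obtain ⟨f, hf, hff₁, hv₀f⟩ :=
    exists_ne_mem_ends_of_degParity_eq_zero (heven v₀) hf₁ (hf₁ends ▸ Sym2.mem_mk_left _ _)
  -- `u` is a second neighbour of the head `v₀`; it lies on the path, and the segment up to it
  -- closes into a cycle.
  obtain ⟨u, hfu⟩ : ∃ u, f.ends = s(v₀, u) := ⟨_, (Sym2.other_spec hv₀f).symm⟩
  have hu : (graphOf (S : Set LatticeEdge)).Adj u v₀ :=
    ⟨fun h => not_isDiag_ends f (by rw [hfu, h]; rfl), f, hf, hfu.trans Sym2.eq_swap⟩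
  obtain ⟨j, hj, hlj⟩ := List.getElem_of_mem (hmax u hu)
  have hj2 : 2 ≤ j := by
    have hj0 : j ≠ 0 := by rintro rfl; exact hu.ne hlj.symm
    have hj1 : j ≠ 1 := by
      rintro rfl
      refine hff₁ (ends_injective ?_)
      rw [hfu, hf₁ends, ← hlj]
      rfl
    omega
  have htake : l.take (j + 1) ≠ [] := by simp
  refine ⟨(l.take (j + 1)).length, by simp; omega,
    List.exists_zmod_injective_of_isChain htake (hnd.sublist (List.take_sublist _ _))
      (hchain.take _) ?_⟩
  rw [List.getLast_eq_getElem, List.head_eq_getElem]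
  simp only [List.getElem_take, List.length_take, show min (j + 1) l.length - 1 = j by omega, hlj]
  exact hu

theorem degParity_image_of_cycle {n : ℕ} [NeZero n] (hn : 3 ≤ n) {c : ZMod n → ℤ × ℤ}
    (hc : Function.Injective c) {g : ZMod n → LatticeEdge}
    (hg : ∀ i, (g i).ends = s(c i, c (i + 1))) (w : ℤ × ℤ) :
    degParity (Finset.univ.image g) w = 0 := by
  classical
  have hone : (1 : ZMod n) ≠ 0 := by
    rw [← Nat.cast_one, Ne, ZMod.natCast_eq_zero_iff]
    exact Nat.not_dvd_of_pos_of_lt one_pos (by omega)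
  have htwo : (2 : ZMod n) ≠ 0 := by
    rw [← Nat.cast_ofNat, Ne, ZMod.natCast_eq_zero_iff]
    exact Nat.not_dvd_of_pos_of_lt two_pos (by omega)
  have hg_inj : Function.Injective g := fun i j hij => by
    have := hg i
    rw [hij, hg j, Sym2.eq_iff] at this
    rcases this with ⟨h1, -⟩ | ⟨h1, h2⟩
    · exact (hc h1).symm
    · exact absurd (by linear_combination hc h2 - hc h1) htwo
  have hsplit : ∀ i, (if w ∈ (g i).ends then 1 else 0 : ZMod 2) =
      (if w = c i then 1 else 0) + (if w = c (i + 1) then 1 else 0) := fun i => by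
    have hne : c i ≠ c (i + 1) := fun h => hone (by linear_combination -hc h)
    simp only [hg, Sym2.mem_iff]
    by_cases h1 : w = c i <;> by_cases h2 : w = c (i + 1) <;> simp_all
  rw [degParity, Finset.filter_image, Finset.card_image_of_injective _ hg_inj,
    Finset.natCast_card_filter, Finset.sum_congr rfl fun i _ => hsplit i, Finset.sum_add_distrib,
    Fintype.sum_equiv (Equiv.addRight 1) (fun i => if w = c (i + 1) then (1 : ZMod 2) else 0)
      (fun i => if w = c i then 1 else 0) fun _ => rfl]
  exact CharTwo.add_self_eq_zero _

theorem isCircuit_of_minimal_even {S : Finset LatticeEdge} (hne : S.Nonempty)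
    (heven : ∀ w, degParity S w = 0)
    (hmin : ∀ T ⊆ S, T.Nonempty → (∀ w, degParity T w = 0) → T = S) : IsCircuit S := by
  obtain ⟨n, hn, c, hc, hadj⟩ := exists_cycle_of_degParity_eq_zero hne heven
  have : NeZero n := ⟨by omega⟩
  choose g hgS hg using fun i => (hadj i).2
  have hS := hmin (Finset.univ.image g) (Finset.image_subset_iff.mpr fun i _ => hgS i)
    (Finset.univ_nonempty.image g) (degParity_image_of_cycle hn hc hg)
  refine ⟨n, hn, c, hc, fun i => ⟨g i, hgS i, hg i⟩, fun e he => ?_⟩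
  obtain ⟨i, -, rfl⟩ := Finset.mem_image.mp (hS ▸ he)
  exact ⟨i, hg i⟩

/-- If `γ` is a contour, then the set `γ* = {e* : e ∈ γ}` of dual
edges is a circuit (a closed self-avoiding path) in the dual lattice. -/
theorem dual_of_contour_isCircuit (γ : Finset LatticeEdge) (h : IsContour γ) :
    IsCircuit (γ.image dualEdge) := by
  obtain ⟨C, hC, -⟩ := h.1
  have hγ := h.coe_eq_edgeBoundary C hC
  refine isCircuit_of_minimal_even ?_ ?_ fun T hT => h.image_dualEdge_eq_of_subset hT
  · obtain ⟨e, he⟩ := edgeBoundary_nonempty hC C.nonempty_supp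
    exact ⟨_, Finset.mem_image_of_mem dualEdge (hγ ▸ he : e ∈ (γ : Set LatticeEdge))⟩
  · rintro ⟨a, b⟩
    rw [degParity_image_dualEdge]
    exact faceParity_eq_zero_of_coe_eq_edgeBoundary hγ a b
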